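/- arXiv:2303.05353 — 2 statements merged into one kernel-verified Lean document; each statement's English description precedes it below -/
import Mathlib

section
/- Let M be a matroid on [n] with basis set B(M). Then the collection {B ∪ ([n] \ B)* : B ∈ B(M)} of transversals of E = [n] ∪ [n]* satisfies the symmetric exchange axiom, i.e., it is the collection of bases of an orthogonal matroid on E (the lift of M). -/
open scoped Classical

/-- The ground set `E = [n] ∪ [n]*`: `(i, true)` encodes `i ∈ [n]` and `(i, false)` encodes
`i* ∈ [n]*`. -/
abbrev OE (n : ℕ) := Fin n × Bool

/-- The involution `* : E → E`. -/
def ostar {n : ℕ} (x : OE n) : OE n := (x.1, !x.2)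

/-- The divergence `{x, x*}`. -/
def pairS {n : ℕ} (x : OE n) : Finset (OE n) := {x, ostar x}

/-- `A` is admissible (a subtransversal): `A ∩ A* = ∅`. -/
def IsAdmissible {n : ℕ} (A : Finset (OE n)) : Prop := ∀ x ∈ A, ostar x ∉ A

/-- A transversal: an admissible set of size `n`. -/
def IsTransversal {n : ℕ} (T : Finset (OE n)) : Prop := T.card = n ∧ IsAdmissible T

/-- `𝓑` is the set of bases of an orthogonal matroid on `E = [n] ∪ [n]*`: a nonempty
collection of transversals satisfying the symmetric exchange axiom. -/
def IsOrthoMatroid {n : ℕ} (𝓑 : Set (Finset (OE n))) : Prop :=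
  𝓑.Nonempty ∧ (∀ B ∈ 𝓑, IsTransversal B) ∧
  ∀ B₁ ∈ 𝓑, ∀ B₂ ∈ 𝓑, ∀ x : OE n,
    x ∈ symmDiff B₁ B₂ → ostar x ∈ symmDiff B₁ B₂ →
    ∃ y : OE n, y ∈ symmDiff B₁ B₂ ∧ ostar y ∈ symmDiff B₁ B₂ ∧
      pairS y ≠ pairS x ∧ symmDiff B₁ (pairS x ∪ pairS y) ∈ 𝓑

/-- An admissible set is independent if it is contained in some basis. -/
def IsIndep {n : ℕ} (𝓑 : Set (Finset (OE n))) (I : Finset (OE n)) : Prop := ∃ B ∈ 𝓑, I ⊆ B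

/-- A circuit: a minimal dependent admissible set. -/
def IsCircuit {n : ℕ} (𝓑 : Set (Finset (OE n))) (C : Finset (OE n)) : Prop :=
  IsAdmissible C ∧ ¬ IsIndep 𝓑 C ∧ ∀ D ⊂ C, IsIndep 𝓑 D

/-- `ℬ` is the set of bases of a matroid on `[n]` (basis exchange axiom). -/
def IsMatroidBases {n : ℕ} (ℬ : Set (Finset (Fin n))) : Prop :=
  ℬ.Nonempty ∧ ∀ B₁ ∈ ℬ, ∀ B₂ ∈ ℬ, ∀ x ∈ B₁, x ∉ B₂ →
    ∃ y ∈ B₂, y ∉ B₁ ∧ insert y (B₁.erase x) ∈ ℬ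

/-- The lift of a basis `B ⊆ [n]` to the transversal `B ∪ ([n] \ B)*` of `E`. -/
def liftB {n : ℕ} (B : Finset (Fin n)) : Finset (OE n) :=
  B.image (fun i => (i, true)) ∪ Bᶜ.image (fun i => (i, false))


section Helpers

lemma mem_liftB {n : ℕ} {A : Finset (Fin n)} {i : Fin n} {b : Bool} :
    (i, b) ∈ liftB A ↔ (b = true ↔ i ∈ A) := by
  cases b <;> simp [liftB, Prod.ext_iff]

lemma pair_mem {n : ℕ} (a k : Fin n) (c d : Bool) : (k, d) ∈ pairS (a, c) ↔ k = a := by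
  cases c <;> cases d <;> simp [pairS, ostar, Prod.ext_iff]

lemma lift_exchange {n : ℕ} (A : Finset (Fin n)) {a b : Fin n} (ha : a ∉ A) (hb : b ∈ A)
    (c c' : Bool) :
    symmDiff (liftB A) (pairS (a, c) ∪ pairS (b, c')) = liftB (insert a (A.erase b)) := by
  have hab : a ≠ b := fun h => ha (h ▸ hb)
  ext ⟨k, d⟩
  rw [Finset.mem_symmDiff]
  simp only [Finset.mem_union, pair_mem, mem_liftB, Finset.mem_insert, Finset.mem_erase]
  by_cases hk1 : k = a
  · subst hk1; cases d <;> simp_all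
  · by_cases hk2 : k = b
    · subst hk2; cases d <;> simp_all
    · cases d <;> simp_all

lemma liftB_card {n : ℕ} (A : Finset (Fin n)) : (liftB A).card = n := by
  rw [liftB, Finset.card_union_of_disjoint, Finset.card_image_of_injective,
    Finset.card_image_of_injective]
  · simpa using Finset.card_add_card_compl A
  · exact fun x y h => by simpa using h
  · exact fun x y h => by simpa using h
  · simp [Finset.disjoint_left]

section Exchange
variable {n : ℕ} {ℬ : Set (Finset (Fin n))}
  (hex : ∀ B₁ ∈ ℬ, ∀ B₂ ∈ ℬ, ∀ x ∈ B₁, x ∉ B₂ →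
    ∃ y ∈ B₂, y ∉ B₁ ∧ insert y (B₁.erase x) ∈ ℬ)

include hex

lemma bases_card_eq : ∀ B₁ ∈ ℬ, ∀ B₂ ∈ ℬ, B₁.card = B₂.card := by
  suffices H : ∀ k, ∀ B₁ ∈ ℬ, ∀ B₂ ∈ ℬ, (B₁ \ B₂).card = k → B₁.card = B₂.card by
    intro B₁ h₁ B₂ h₂; exact H _ B₁ h₁ B₂ h₂ rfl
  intro k
  induction k with
  | zero =>
    intro B₁ h₁ B₂ h₂ hc
    have hsub : B₁ ⊆ B₂ := by
      intro z hz
      by_contra hz2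
      have : z ∈ B₁ \ B₂ := Finset.mem_sdiff.mpr ⟨hz, hz2⟩
      simp [Finset.card_eq_zero.mp hc] at this
    have hsub2 : B₂ ⊆ B₁ := by
      intro z hz
      by_contra hz2
      obtain ⟨y, hy, hy2, -⟩ := hex B₂ h₂ B₁ h₁ z hz hz2
      exact hy2 (hsub hy)
    exact congrArg Finset.card (Finset.Subset.antisymm hsub hsub2)
  | succ k ih =>
    intro B₁ h₁ B₂ h₂ hc
    have hne : (B₁ \ B₂).Nonempty := by
      rw [← Finset.card_pos, hc]; omega
    obtain ⟨x, hx⟩ := hne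
    rw [Finset.mem_sdiff] at hx
    obtain ⟨y, hy, hy2, hB⟩ := hex B₁ h₁ B₂ h₂ x hx.1 hx.2
    have hcard : (insert y (B₁.erase x)).card = B₁.card := by
      rw [Finset.card_insert_of_notMem (fun hh => hy2 (Finset.mem_of_mem_erase hh)),
        Finset.card_erase_of_mem hx.1]
      have : 0 < B₁.card := Finset.card_pos.mpr ⟨x, hx.1⟩
      omega
    have hsd : insert y (B₁.erase x) \ B₂ = (B₁ \ B₂).erase x := by
      ext z
      simp only [Finset.mem_sdiff, Finset.mem_insert, Finset.mem_erase]
      constructor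
      · rintro ⟨h1 | ⟨h1, h1'⟩, h2⟩
        · exact absurd (h1 ▸ hy) h2
        · exact ⟨h1, h1', h2⟩
      · rintro ⟨h1, h2, h3⟩; exact ⟨Or.inr ⟨h1, h2⟩, h3⟩
    have := ih (insert y (B₁.erase x)) hB B₂ h₂
      (by rw [hsd, Finset.card_erase_of_mem (Finset.mem_sdiff.mpr hx), hc]; omega)
    omega

lemma bases_coexchange : ∀ B₁ ∈ ℬ, ∀ B₂ ∈ ℬ, ∀ x ∈ B₂, x ∉ B₁ →
    ∃ y ∈ B₁, y ∉ B₂ ∧ insert x (B₁.erase y) ∈ ℬ := by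
  suffices H : ∀ k, ∀ B₁ ∈ ℬ, ∀ B₂ ∈ ℬ, (B₂ \ B₁).card ≤ k + 1 → ∀ x ∈ B₂, x ∉ B₁ →
      ∃ y ∈ B₁, y ∉ B₂ ∧ insert x (B₁.erase y) ∈ ℬ by
    intro B₁ h₁ B₂ h₂ x hx hx2
    exact H (B₂ \ B₁).card B₁ h₁ B₂ h₂ (by omega) x hx hx2
  intro k
  induction k with
  | zero =>
    intro B₁ h₁ B₂ h₂ hc x hx hx2
    have hxm : x ∈ B₂ \ B₁ := Finset.mem_sdiff.mpr ⟨hx, hx2⟩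
    have hsing : B₂ \ B₁ = {x} := by
      apply Finset.eq_singleton_iff_unique_mem.mpr
      refine ⟨hxm, fun z hz => ?_⟩
      by_contra hne
      have : ({z, x} : Finset (Fin n)) ⊆ B₂ \ B₁ := by
        intro w hw; simp at hw; rcases hw with rfl | rfl <;> assumption
      have h2 : ({z, x} : Finset (Fin n)).card = 2 := Finset.card_pair hne
      have := Finset.card_le_card this
      omega
    have hcards : B₁.card = B₂.card := bases_card_eq hex B₁ h₁ B₂ h₂
    have hc1 : (B₁ \ B₂).card = 1 := by
      have e1 := Finset.card_sdiff_add_card_inter B₁ B₂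
      have e2 := Finset.card_sdiff_add_card_inter B₂ B₁
      rw [Finset.inter_comm] at e2
      rw [hsing] at e2
      simp at e2
      omega
    obtain ⟨y, hy⟩ := Finset.card_eq_one.mp hc1
    have hy1 : ∀ z, z ∈ B₁ ∧ z ∉ B₂ ↔ z = y := fun z => by
      rw [← Finset.mem_sdiff, hy, Finset.mem_singleton]
    have hy2 : ∀ z, z ∈ B₂ ∧ z ∉ B₁ ↔ z = x := fun z => by
      rw [← Finset.mem_sdiff, hsing, Finset.mem_singleton]
    have hyB : y ∈ B₁ ∧ y ∉ B₂ := (hy1 y).mpr rfl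
    refine ⟨y, hyB.1, hyB.2, ?_⟩
    have : insert x (B₁.erase y) = B₂ := by
      ext z
      simp only [Finset.mem_insert, Finset.mem_erase]
      constructor
      · rintro (rfl | ⟨hzy, hzB⟩)
        · exact hx
        · by_contra hz2
          exact hzy ((hy1 z).mp ⟨hzB, hz2⟩)
      · intro hz
        by_cases hz1 : z ∈ B₁
        · exact Or.inr ⟨fun hh => hyB.2 (hh ▸ hz), hz1⟩
        · exact Or.inl ((hy2 z).mp ⟨hz, hz1⟩)
    rw [this]; exact h₂
  | succ k ih =>
    intro B₁ h₁ B₂ h₂ hc x hx hx2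
    by_cases hsmall : (B₂ \ B₁).card ≤ k + 1
    · exact ih B₁ h₁ B₂ h₂ hsmall x hx hx2
    · have hc2 : (B₂ \ B₁).card = k + 2 := by omega
      have hxm : x ∈ B₂ \ B₁ := Finset.mem_sdiff.mpr ⟨hx, hx2⟩
      have : ((B₂ \ B₁).erase x).Nonempty := by
        rw [← Finset.card_pos, Finset.card_erase_of_mem hxm]; omega
      obtain ⟨z, hz⟩ := this
      have hzx : z ≠ x := Finset.ne_of_mem_erase hz
      have hzm := Finset.mem_of_mem_erase hz
      rw [Finset.mem_sdiff] at hzm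
      obtain ⟨w, hw, hw2, hB'⟩ := hex B₂ h₂ B₁ h₁ z hzm.1 hzm.2
      set B₂' := insert w (B₂.erase z) with hB₂'
      have hxB₂' : x ∈ B₂' := by
        simp only [hB₂', Finset.mem_insert, Finset.mem_erase]
        exact Or.inr ⟨fun hh => hzx hh.symm, hx⟩
      have hsd : B₂' \ B₁ = (B₂ \ B₁).erase z := by
        ext u
        simp only [hB₂', Finset.mem_sdiff, Finset.mem_insert, Finset.mem_erase]
        constructor
        · rintro ⟨h1 | ⟨h1, h1'⟩, h2⟩
          · exact absurd (h1 ▸ hw) h2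
          · exact ⟨h1, h1', h2⟩
        · rintro ⟨h1, h2, h3⟩; exact ⟨Or.inr ⟨h1, h2⟩, h3⟩
      have hle : (B₂' \ B₁).card ≤ k + 1 := by
        rw [hsd, Finset.card_erase_of_mem (Finset.mem_sdiff.mpr hzm), hc2]; omega
      obtain ⟨y, hy, hy2, hfin⟩ := ih B₁ h₁ B₂' hB' hle x hxB₂' hx2
      refine ⟨y, hy, fun hyB₂ => hy2 ?_, hfin⟩
      simp only [hB₂', Finset.mem_insert, Finset.mem_erase]
      exact Or.inr ⟨fun hh => hzm.2 (hh ▸ hy), hyB₂⟩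

end Exchange

end Helpers

/-- The lift `{B ∪ ([n] \ B)* : B ∈ ℬ}` of a matroid is an orthogonal matroid on
`E = [n] ∪ [n]*`. -/
theorem lift_isOrthoMatroid {n : ℕ} (ℬ : Set (Finset (Fin n))) (h : IsMatroidBases ℬ) :
    IsOrthoMatroid {T | ∃ B ∈ ℬ, T = liftB B} := by
  obtain ⟨hne, hex⟩ := h
  refine ⟨?_, ?_, ?_⟩
  · obtain ⟨B, hB⟩ := hne
    exact ⟨liftB B, B, hB, rfl⟩
  · rintro T ⟨A, hA, rfl⟩
    refine ⟨liftB_card A, ?_⟩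
    rintro ⟨i, b⟩ hib hib2
    rw [mem_liftB] at hib
    have h2 : ((i, !b) : OE n) ∈ liftB A := hib2
    rw [mem_liftB] at h2
    cases b <;> simp_all
  · rintro T₁ ⟨A₁, hA₁, rfl⟩ T₂ ⟨A₂, hA₂, rfl⟩ ⟨i, b⟩ hx hx2
    rw [Finset.mem_symmDiff, mem_liftB, mem_liftB] at hx
    have key : ¬ (i ∈ A₁ ↔ i ∈ A₂) := by tauto
    by_cases hi : i ∈ A₁
    · have hi2 : i ∉ A₂ := fun hh => key ⟨fun _ => hh, fun _ => hi⟩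
      obtain ⟨j, hj, hj2, hB⟩ := hex A₁ hA₁ A₂ hA₂ i hi hi2
      refine ⟨(j, true), ?_, ?_, ?_, ?_⟩
      · rw [Finset.mem_symmDiff, mem_liftB, mem_liftB]; tauto
      · have hst : ostar ((j, true) : OE n) = (j, false) := rfl
        rw [hst, Finset.mem_symmDiff, mem_liftB, mem_liftB]
        simp only [Bool.false_eq_true, false_iff]
        tauto
      · intro heq
        have hm : ((j, true) : OE n) ∈ pairS ((i, b) : OE n) :=
          heq ▸ (by simp [pairS] : ((j, true) : OE n) ∈ pairS ((j, true) : OE n))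
        rw [pair_mem] at hm
        exact hj2 (show j ∈ A₁ by rw [hm]; exact hi)
      · rw [Finset.union_comm, lift_exchange A₁ hj2 hi]
        exact ⟨_, hB, rfl⟩
    · have hi2 : i ∈ A₂ := by tauto
      obtain ⟨j, hj, hj2, hB⟩ := bases_coexchange hex A₁ hA₁ A₂ hA₂ i hi2 hi
      refine ⟨(j, true), ?_, ?_, ?_, ?_⟩
      · rw [Finset.mem_symmDiff, mem_liftB, mem_liftB]; tauto
      · have hst : ostar ((j, true) : OE n) = (j, false) := rfl
        rw [hst, Finset.mem_symmDiff, mem_liftB, mem_liftB]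
        simp only [Bool.false_eq_true, false_iff]
        tauto
      · intro heq
        have hm : ((j, true) : OE n) ∈ pairS ((i, b) : OE n) :=
          heq ▸ (by simp [pairS] : ((j, true) : OE n) ∈ pairS ((j, true) : OE n))
        rw [pair_mem] at hm
        exact hi (show i ∈ A₁ by rw [← hm]; exact hj)
      · rw [lift_exchange A₁ hi hj]
        exact ⟨_, hB, rfl⟩
end

section
/- Let M = (E, 𝓑) be an orthogonal matroid, B ∈ 𝓑, and x ∈ E \ B. Then there exists a unique circuit C of M with C ⊆ B ∪ {x}; moreover this fundamental circuit is given by C = {x} ∪ {b ∈ B \ {x*} : B △ {b, b*, x, x*} ∈ 𝓑}. -/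
open scoped Classical

/-- The explicit description `{x} ∪ {b ∈ B \ {x*} : B △ {b, b*, x, x*} ∈ 𝓑}` of the
fundamental circuit with respect to a basis `B` and `x ∉ B`. -/
noncomputable def fundCirc {n : ℕ} (𝓑 : Set (Finset (OE n))) (B : Finset (OE n)) (x : OE n) :
    Finset (OE n) :=
  insert x ((B.erase (ostar x)).filter (fun b => symmDiff B (pairS b ∪ pairS x) ∈ 𝓑))

lemma ostar_ostar {n : ℕ} (x : OE n) : ostar (ostar x) = x := by simp [ostar]
lemma ostar_ne {n : ℕ} (x : OE n) : ostar x ≠ x := by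
  obtain ⟨i, s⟩ := x; cases s <;> simp [ostar]
lemma mem_pairS {n : ℕ} {x y : OE n} : y ∈ pairS x ↔ y = x ∨ y = ostar x := by
  simp [pairS]
lemma pairS_ostar {n : ℕ} (x : OE n) : pairS (ostar x) = pairS x := by
  simp [pairS, ostar_ostar, Finset.pair_comm]
lemma eq_or_eq_ostar_of_fst_eq {n : ℕ} {a b : OE n} (h : a.1 = b.1) : b = a ∨ b = ostar a := by
  obtain ⟨i, s⟩ := a; obtain ⟨j, t⟩ := b
  simp only at h; subst h
  cases s <;> cases t <;> simp [ostar]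

lemma transversal_mem_iff {n : ℕ} {T : Finset (OE n)} (hT : IsTransversal T) (x : OE n) :
    ostar x ∈ T ↔ x ∉ T := by
  constructor
  · intro h hx
    exact hT.2 x hx h
  · intro hx
    have himg : T.image Prod.fst = Finset.univ := by
      apply Finset.eq_univ_of_card
      rw [Finset.card_image_of_injOn, hT.1]
      · simp
      intro a ha b hb hab
      rcases eq_or_eq_ostar_of_fst_eq hab with h' | h'
      · exact h'.symm
      · exact absurd (h' ▸ hb) (hT.2 a ha)
    have : x.1 ∈ T.image Prod.fst := by rw [himg]; exact Finset.mem_univ _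
    obtain ⟨a, ha, hafst⟩ := Finset.mem_image.1 this
    rcases eq_or_eq_ostar_of_fst_eq hafst with h' | h'
    · exact absurd (h' ▸ ha) hx
    · rw [h', ostar_ostar]; exact ha


lemma star_mem_symmDiff {n : ℕ} {T₁ T₂ : Finset (OE n)} (h₁ : IsTransversal T₁)
    (h₂ : IsTransversal T₂) {x : OE n} (hx : x ∈ symmDiff T₁ T₂) :
    ostar x ∈ symmDiff T₁ T₂ := by
  rw [Finset.mem_symmDiff] at hx ⊢
  rcases hx with ⟨h1, h2⟩ | ⟨h1, h2⟩
  · exact Or.inr ⟨(transversal_mem_iff h₂ x).2 h2, fun hc => h₁.2 x h1 hc⟩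
  · exact Or.inl ⟨(transversal_mem_iff h₁ x).2 h2, fun hc => h₂.2 x h1 hc⟩


/-- Fundamental circuits: for a basis `B` and `x ∉ B` there is a unique circuit contained in
`B ∪ {x}`, and it is given by `{x} ∪ {b ∈ B \ {x*} : B △ {b, b*, x, x*} ∈ 𝓑}`. -/
theorem fundamental_circuit {n : ℕ} (𝓑 : Set (Finset (OE n))) (h : IsOrthoMatroid 𝓑)
    (B : Finset (OE n)) (hB : B ∈ 𝓑) (x : OE n) (hx : x ∉ B) :
    IsCircuit 𝓑 (fundCirc 𝓑 B x) ∧ fundCirc 𝓑 B x ⊆ insert x B ∧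
      ∀ C : Finset (OE n), IsCircuit 𝓑 C → C ⊆ insert x B → C = fundCirc 𝓑 B x := by
  obtain ⟨-, hTrans, hExch⟩ := h
  have hBt := hTrans B hB
  have hxs : ostar x ∈ B := (transversal_mem_iff hBt x).2 hx
  -- membership characterization of the fundamental circuit
  have hmemC : ∀ z, z ∈ fundCirc 𝓑 B x ↔
      z = x ∨ (z ∈ B ∧ z ≠ ostar x ∧ symmDiff B (pairS z ∪ pairS x) ∈ 𝓑) := by
    intro z
    simp only [fundCirc, Finset.mem_insert, Finset.mem_filter, Finset.mem_erase]
    tauto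
  have hxC : x ∈ fundCirc 𝓑 B x := by rw [hmemC]; exact Or.inl rfl
  -- facts about a filtered element b
  have hbfacts : ∀ b : OE n, b ∈ B → b ≠ ostar x →
      b ≠ x ∧ ostar b ∉ B ∧ ostar b ≠ x ∧ ostar b ≠ ostar x := by
    intro b hbB hbxs
    refine ⟨fun hbx => hx (hbx ▸ hbB), hBt.2 b hbB, ?_, ?_⟩
    · intro hc; exact hbxs (by rw [← ostar_ostar b, hc])
    · intro hc
      have hbx2 : b = x := by rw [← ostar_ostar b, hc, ostar_ostar]
      exact hx (hbx2 ▸ hbB)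
  -- membership in the exchanged basis B △ (pair b ∪ pair x)
  have hmemB' : ∀ b : OE n, b ∈ B → b ≠ ostar x → ∀ z,
      (z = x ∨ (z ∈ B ∧ z ≠ ostar x ∧ z ≠ b)) → z ∈ symmDiff B (pairS b ∪ pairS x) := by
    intro b hbB hbxs z hz
    obtain ⟨hbx, hbsB, hbsx, hbsxs⟩ := hbfacts b hbB hbxs
    rw [Finset.mem_symmDiff]
    rcases hz with rfl | ⟨hzB, hzxs, hzb⟩
    · exact Or.inr ⟨by simp [mem_pairS], hx⟩
    · refine Or.inl ⟨hzB, ?_⟩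
      simp only [Finset.mem_union, mem_pairS, not_or]
      refine ⟨⟨hzb, fun hc => ?_⟩, ⟨fun hc => hx (hc ▸ hzB), hzxs⟩⟩
      exact hbsB (hc ▸ hzB)
  -- admissibility
  have hCadm : IsAdmissible (fundCirc 𝓑 B x) := by
    intro z hz hzs
    rw [hmemC] at hz hzs
    rcases hz with rfl | ⟨hzB, hzxs, -⟩
    · rcases hzs with hc | ⟨-, hc2, -⟩
      · exact ostar_ne _ hc
      · exact hc2 rfl
    · rcases hzs with hc | ⟨hc, -, -⟩
      · exact hzxs (by rw [← hc]; exact (ostar_ostar z).symm)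
      · exact hBt.2 z hzB hc
  -- the fundamental circuit is dependent
  have hCdep : ¬ IsIndep 𝓑 (fundCirc 𝓑 B x) := by
    rintro ⟨B', hB', hsub⟩
    have hB't := hTrans B' hB'
    have hxB' : x ∈ B' := hsub hxC
    have hxd : x ∈ symmDiff B B' := Finset.mem_symmDiff.2 (Or.inr ⟨hxB', hx⟩)
    obtain ⟨y, hy, hys, hpair, hBy⟩ :=
      hExch B hB B' hB' x hxd (star_mem_symmDiff hBt hB't hxd)
    have key : ∀ b : OE n, b ∈ symmDiff B B' → pairS b = pairS y → b ∈ B → False := by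
      intro b hbd hbp hbB
      have hbB' : b ∉ B' := by
        rcases Finset.mem_symmDiff.1 hbd with ⟨-, h2⟩ | ⟨-, h2⟩
        · exact h2
        · exact absurd hbB h2
      have hbxs : b ≠ ostar x := by
        rintro rfl
        exact hpair (by rw [← hbp, pairS_ostar])
      have hbC : b ∈ fundCirc 𝓑 B x := by
        rw [hmemC]
        refine Or.inr ⟨hbB, hbxs, ?_⟩
        rwa [Finset.union_comm, hbp]
      exact hbB' (hsub hbC)
    by_cases hyB : y ∈ B
    · exact key y hy rfl hyB
    · exact key (ostar y) hys (pairS_ostar y) ((transversal_mem_iff hBt y).2 hyB)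
  -- proper subsets are independent
  have hCsub : fundCirc 𝓑 B x ⊆ insert x B := by
    intro z hz
    rw [hmemC] at hz
    rcases hz with rfl | ⟨hzB, -, -⟩
    · exact Finset.mem_insert_self _ _
    · exact Finset.mem_insert_of_mem hzB
  have hCmin : ∀ D ⊂ fundCirc 𝓑 B x, IsIndep 𝓑 D := by
    intro D hD
    obtain ⟨c, hcC, hcD⟩ := Finset.exists_of_ssubset hD
    rw [hmemC] at hcC
    rcases hcC with rfl | ⟨hcB, hcxs, hc𝓑⟩
    · refine ⟨B, hB, fun z hz => ?_⟩
      have hzC := hD.1 hz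
      rw [hmemC] at hzC
      rcases hzC with rfl | ⟨hzB, -, -⟩
      · exact absurd hz hcD
      · exact hzB
    · refine ⟨symmDiff B (pairS c ∪ pairS x), hc𝓑, fun z hz => ?_⟩
      have hzC := hD.1 hz
      rw [hmemC] at hzC
      refine hmemB' c hcB hcxs z ?_
      rcases hzC with rfl | ⟨hzB, hzxs, -⟩
      · exact Or.inl rfl
      · exact Or.inr ⟨hzB, hzxs, fun hc => hcD (hc ▸ hz)⟩
  refine ⟨⟨hCadm, hCdep, hCmin⟩, hCsub, ?_⟩
  -- uniqueness
  intro C' hC' hC'sub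
  have hxC' : x ∈ C' := by
    by_contra hxC'
    refine hC'.2.1 ⟨B, hB, fun z hz => ?_⟩
    rcases Finset.mem_insert.1 (hC'sub hz) with rfl | hzB
    · exact absurd hz hxC'
    · exact hzB
  have hxsC' : ostar x ∉ C' := hC'.1 x hxC'
  have hsub : fundCirc 𝓑 B x ⊆ C' := by
    intro b hb
    rw [hmemC] at hb
    rcases hb with rfl | ⟨hbB, hbxs, hb𝓑⟩
    · exact hxC'
    · by_contra hbC'
      refine hC'.2.1 ⟨symmDiff B (pairS b ∪ pairS x), hb𝓑, fun z hz => ?_⟩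
      refine hmemB' b hbB hbxs z ?_
      rcases Finset.mem_insert.1 (hC'sub hz) with rfl | hzB
      · exact Or.inl rfl
      · refine Or.inr ⟨hzB, fun hc => hxsC' (hc ▸ hz), fun hc => hbC' (hc ▸ hz)⟩
  by_contra hne
  exact hCdep (hC'.2.2 _ (Finset.ssubset_iff_subset_ne.2 ⟨hsub, fun hc => hne hc.symm⟩))
end
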